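/- Let E be a real Hilbert space, let φ : E → ℝ and g : E → E, and let η > 0 be such that for all x, y ∈ E, φ(y) ≤ φ(x) + ⟪g x, y − x⟫ − (η/2)‖y − x‖². Let ω > 0, ρ > 0, c ∈ E, m⁰ ∈ E, and suppose m⁺ ∈ E is a global minimizer of the function m ↦ ω·⟪g m⁰, m⟫ + (ρ/2)‖m − c‖². Then ω·φ(m⁺) + (ρ/2)‖m⁺ − c‖² ≤ ω·φ(m⁰) + (ρ/2)‖m⁰ − c‖² − (η·ω/2)‖m⁺ − m⁰‖². -/

import Mathlib

open RealInnerProductSpace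

theorem stmt13_general {E : Type*} [NormedAddCommGroup E] [InnerProductSpace ℝ E]
    (φ : E → ℝ) (g : E → E) (η : ℝ)
    (hconc : ∀ x y : E, φ y ≤ φ x + ⟪g x, y - x⟫ - (η / 2) * ‖y - x‖ ^ 2)
    (ω ρ : ℝ) (hω : 0 < ω) (c m0 : E) (mplus : E)
    (hmin : ∀ m : E, ω * ⟪g m0, mplus⟫ + (ρ / 2) * ‖mplus - c‖ ^ 2
        ≤ ω * ⟪g m0, m⟫ + (ρ / 2) * ‖m - c‖ ^ 2) :
    ω * φ mplus + (ρ / 2) * ‖mplus - c‖ ^ 2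
      ≤ ω * φ m0 + (ρ / 2) * ‖m0 - c‖ ^ 2 - (η * ω / 2) * ‖mplus - m0‖ ^ 2 := by
  have surrogate_descent := hmin m0
  have majorant :
      φ mplus ≤ φ m0 + (⟪g m0, mplus⟫ - ⟪g m0, m0⟫) - (η / 2) * ‖mplus - m0‖ ^ 2 := by
    simpa only [inner_sub_right] using hconc m0 mplus
  linear_combination ω * majorant + surrogate_descent

theorem stmt13 {E : Type*} [NormedAddCommGroup E] [InnerProductSpace ℝ E] [CompleteSpace E]
    (φ : E → ℝ) (g : E → E) (η : ℝ) (hη : 0 < η)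
    (hconc : ∀ x y : E, φ y ≤ φ x + ⟪g x, y - x⟫ - (η / 2) * ‖y - x‖ ^ 2)
    (ω ρ : ℝ) (hω : 0 < ω) (hρ : 0 < ρ) (c m0 : E) (mplus : E)
    (hmin : ∀ m : E, ω * ⟪g m0, mplus⟫ + (ρ / 2) * ‖mplus - c‖ ^ 2
        ≤ ω * ⟪g m0, m⟫ + (ρ / 2) * ‖m - c‖ ^ 2) :
    ω * φ mplus + (ρ / 2) * ‖mplus - c‖ ^ 2
      ≤ ω * φ m0 + (ρ / 2) * ‖m0 - c‖ ^ 2 - (η * ω / 2) * ‖mplus - m0‖ ^ 2 :=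
  stmt13_general φ g η hconc ω ρ hω c m0 mplus hmin
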